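/- arXiv:1412.4683 — 2 statements merged into one kernel-verified Lean document; each statement's English description precedes it below -/
import Mathlib

section
/- Let n ≥ 1, let F be an n-separating family of subsets of [k], and let S ⊆ [k] with |S| = n + 1. Then for every nonempty proper subset T ⊊ S, either T or S ∖ T belongs to the restricted family {A ∩ S : A ∈ F}. -/
open Finset

/-- `A` separates `B` if both `A ∩ B` and `Aᶜ ∩ B` are nonempty. -/
def Separates {X : Type*} [Fintype X] [DecidableEq X] (A B : Finset X) : Prop :=
  (A ∩ B).Nonempty ∧ (Aᶜ ∩ B).Nonempty

/-- `F` is `n`-separating if every separable collection `B₁, …, Bₙ` is simultaneously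
separated by some member of `F`. -/
def NSeparating {X : Type*} [Fintype X] [DecidableEq X] (n : ℕ) (F : Finset (Finset X)) : Prop :=
  ∀ B : Fin n → Finset X, (∃ A : Finset X, ∀ i, Separates A (B i)) →
    ∃ A ∈ F, ∀ i, Separates A (B i)

lemma sep_pair {k : ℕ} (A : Finset (Fin k)) (x y : Fin k) (h : Separates A {x, y}) :
    x ∈ A ↔ y ∉ A := by
  obtain ⟨⟨u, hu⟩, ⟨v, hv⟩⟩ := h
  simp only [Finset.mem_inter, Finset.mem_compl, Finset.mem_insert, Finset.mem_singleton] at hu hv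
  rcases hu with ⟨huA, hu | hu⟩ <;> rcases hv with ⟨hvA, hv | hv⟩ <;> subst_vars <;> tauto

theorem stmt_6 (n k : ℕ) (hn : 1 ≤ n) (F : Finset (Finset (Fin k)))
    (hF : NSeparating n F) (S : Finset (Fin k)) (hS : S.card = n + 1)
    (T : Finset (Fin k)) (hTS : T ⊆ S) (hT0 : T.Nonempty) (hTne : T ≠ S) :
    T ∈ F.image (fun A => A ∩ S) ∨ S \ T ∈ F.image (fun A => A ∩ S) := by
  obtain ⟨t0, ht0⟩ := hT0
  have hST : (S \ T).Nonempty := by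
    rw [Finset.sdiff_nonempty]
    intro h
    exact hTne (Finset.Subset.antisymm hTS h)
  obtain ⟨s0, hs0'⟩ := hST
  have ht0S : t0 ∈ S := hTS ht0
  have hs0S : s0 ∈ S := (Finset.mem_sdiff.mp hs0').1
  have hs0T : s0 ∉ T := (Finset.mem_sdiff.mp hs0').2
  have hs0t0 : s0 ≠ t0 := fun h => hs0T (h ▸ ht0)
  have hcard : (S.erase t0).card = n := by
    rw [Finset.card_erase_of_mem ht0S, hS]
    rfl
  -- the partner of an element
  set p : Fin k → Fin k := fun x => if x ∈ T then s0 else t0 with hp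
  -- enumeration of S.erase t0
  let e : Fin n ≃ (S.erase t0) := (Fintype.equivFinOfCardEq (by
    rw [Fintype.card_coe]; exact hcard)).symm
  set B : Fin n → Finset (Fin k) := fun i => {(e i : Fin k), p (e i : Fin k)} with hB
  -- key: A separates all B i iff separates pair for every x in erase
  have hall : ∀ A : Finset (Fin k), (∀ i, Separates A (B i)) ↔
      (∀ x ∈ S.erase t0, Separates A {x, p x}) := by
    intro A
    constructor
    · intro h x hx
      have := h (e.symm ⟨x, hx⟩)
      simpa [hB, e.apply_symm_apply] using this
    · intro h i
      exact h (e i) (e i).2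
  -- T separates all pairs
  have hTsep : ∀ x ∈ S.erase t0, Separates T {x, p x} := by
    intro x hx
    have hxt0 : x ≠ t0 := (Finset.mem_erase.mp hx).1
    by_cases hxT : x ∈ T
    · refine ⟨⟨x, ?_⟩, ⟨s0, ?_⟩⟩ <;>
        simp [hp, hxT, hs0T, Finset.mem_inter, Finset.mem_compl]
    · refine ⟨⟨t0, ?_⟩, ⟨x, ?_⟩⟩ <;>
        simp [hp, hxT, ht0, Finset.mem_inter, Finset.mem_compl]
  obtain ⟨A, hAF, hAsep⟩ := hF B ⟨T, (hall T).mpr hTsep⟩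
  have hAsep' := (hall A).mp hAsep
  -- pair condition for each x in erase
  have key : ∀ x ∈ S.erase t0, (x ∈ A ↔ p x ∉ A) := by
    intro x hx
    exact sep_pair A x (p x) (hAsep' x hx)
  have hs0erase : s0 ∈ S.erase t0 := Finset.mem_erase.mpr ⟨hs0t0, hs0S⟩
  have hs0p : s0 ∈ A ↔ t0 ∉ A := by
    have := key s0 hs0erase
    simpa [hp, hs0T] using this
  -- main dichotomy
  have main : ∀ x ∈ S, (x ∈ A ↔ (x ∈ T ↔ t0 ∈ A)) := by
    intro x hxS
    by_cases hxt0 : x = t0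
    · subst hxt0; simp [ht0]
    · have hx : x ∈ S.erase t0 := Finset.mem_erase.mpr ⟨hxt0, hxS⟩
      have hk := key x hx
      by_cases hxT : x ∈ T
      · rw [hp] at hk
        simp only [hxT, if_pos] at hk
        constructor
        · intro hxA
          have hs0nA : s0 ∉ A := hk.mp hxA
          simp only [hxT, true_iff]
          by_contra ht0A
          exact hs0nA (hs0p.mpr ht0A)
        · intro h
          have ht0A : t0 ∈ A := by simpa [hxT] using h
          have : s0 ∉ A := fun hs => (hs0p.mp hs) ht0A
          tauto
      · rw [hp] at hk
        simp only [hxT, if_neg, not_false_iff] at hk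
        constructor
        · intro hxA
          have : t0 ∉ A := hk.mp hxA
          simp [hxT]
          tauto
        · intro h
          have ht0nA : t0 ∉ A := by
            intro ht0A
            simp [hxT] at h
            exact h ht0A
          exact hk.mpr ht0nA
  by_cases ht0A : t0 ∈ A
  · left
    refine Finset.mem_image.mpr ⟨A, hAF, ?_⟩
    ext x
    simp only [Finset.mem_inter]
    constructor
    · rintro ⟨hxA, hxS⟩
      exact ((main x hxS).mp hxA).mpr ht0A
    · intro hxT
      exact ⟨(main x (hTS hxT)).mpr (by tauto), hTS hxT⟩
  · right
    refine Finset.mem_image.mpr ⟨A, hAF, ?_⟩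
    ext x
    simp only [Finset.mem_inter, Finset.mem_sdiff]
    constructor
    · rintro ⟨hxA, hxS⟩
      refine ⟨hxS, fun hxT => ht0A (((main x hxS).mp hxA).mp hxT)⟩
    · rintro ⟨hxS, hxT⟩
      exact ⟨(main x hxS).mpr (by tauto), hxS⟩
end

section
/- Let k ≥ 2 be even and let F be a 2-splitting family of subsets of [k]. Then |F| ≥ 2^{2k} / (9·C(k, k/2)²), where C(k, k/2) is the central binomial coefficient. -/
open Finset

/-- `A` splits `B` if `|A ∩ B|` equals `⌊|B|/2⌋` or `⌈|B|/2⌉`. -/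
def Splits {X : Type*} [DecidableEq X] (A B : Finset X) : Prop :=
  (A ∩ B).card = B.card / 2 ∨ (A ∩ B).card = (B.card + 1) / 2

/-- `F` is `n`-splitting if every splittable collection `B₁, …, Bₙ` is simultaneously
split by some member of `F`. -/
def NSplitting {X : Type*} [Fintype X] [DecidableEq X] (n : ℕ) (F : Finset (Finset X)) : Prop :=
  ∀ B : Fin n → Finset X, (∃ A : Finset X, ∀ i, Splits A (B i)) →
    ∃ A ∈ F, ∀ i, Splits A (B i)

/-!
Every pair of sets has a common splitter, so a 2-splitting family must split all `2^(2k)` pairs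
`(B₁, B₂)`. A fixed `A` splits only `3·C(k, k/2)` sets `B`: `B ↦ A ∆ B` is injective and, since
`|A ∩ B|` is about `|B|/2`, lands in the sets of size `|A| - 1`, `|A|` or `|A| + 1`. Hence each
member of the family splits at most `9·C(k, k/2)²` pairs.
-/

open scoped symmDiff

instance {X : Type*} [DecidableEq X] (A B : Finset X) : Decidable (Splits A B) :=
  inferInstanceAs (Decidable (_ ∨ _))

section

variable {X : Type*} [DecidableEq X]

lemma card_symmDiff_add_two_mul_card_inter (A B : Finset X) :
    #(A ∆ B) + 2 * #(A ∩ B) = #A + #B := by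
  rw [symmDiff_eq_sup_sdiff_inf, sup_eq_union, inf_eq_inter, card_sdiff_of_subset inter_subset_union,
    ← card_union_add_card_inter]
  have := card_le_card (inter_subset_union : A ∩ B ⊆ A ∪ B)
  omega

lemma Splits.card_symmDiff_mem_Icc {A B : Finset X} (h : Splits A B) :
    #(A ∆ B) ∈ Icc (#A - 1) (#A + 1) := by
  have := card_symmDiff_add_two_mul_card_inter A B
  rw [mem_Icc]
  rcases h with h | h <;> omega

lemma splits_union_union {S T U B : Finset X} (hS : S ⊆ B) (hT : T ⊆ B) (hST : Disjoint S T)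
    (hU : Disjoint U B) (hcard : #S + #T = #B / 2) : Splits (S ∪ T ∪ U) B := by
  left
  rw [union_inter_distrib_right, inter_eq_left.2 (union_subset hS hT),
    disjoint_iff_inter_eq_empty.1 hU, union_empty, card_union_of_disjoint hST, hcard]

/-- Half of `B₁ ∩ B₂`, topped up independently inside `B₁ \ B₂` and inside `B₂ \ B₁`. -/
lemma exists_splits_pair (B₁ B₂ : Finset X) : ∃ A, Splits A B₁ ∧ Splits A B₂ := by
  obtain ⟨S, hS, hSc⟩ := exists_subset_card_eq (s := B₁ ∩ B₂) (Nat.div_le_self _ 2)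
  have h₁ := card_inter_add_card_sdiff B₁ B₂
  have h₂ := card_inter_add_card_sdiff B₂ B₁
  rw [inter_comm] at h₂
  obtain ⟨T, hT, hTc⟩ := exists_subset_card_eq (s := B₁ \ B₂) (n := #B₁ / 2 - #S) (by omega)
  obtain ⟨U, hU, hUc⟩ := exists_subset_card_eq (s := B₂ \ B₁) (n := #B₂ / 2 - #S) (by omega)
  refine ⟨S ∪ T ∪ U, splits_union_union (hS.trans inter_subset_left) (hT.trans sdiff_subset)
    (disjoint_sdiff.mono (hS.trans inter_subset_right) hT) (sdiff_disjoint.mono_left hU)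
    (by omega), ?_⟩
  rw [union_right_comm]
  exact splits_union_union (hS.trans inter_subset_right) (hU.trans sdiff_subset)
    (disjoint_sdiff.mono (hS.trans inter_subset_left) hU) (sdiff_disjoint.mono_left hT) (by omega)

variable [Fintype X]

lemma card_filter_splits_le (A : Finset X) :
    #{B | Splits A B} ≤ 3 * (Fintype.card X).choose (Fintype.card X / 2) := by
  set n := Fintype.card X
  have hmaps : Set.MapsTo (symmDiff A) (({B | Splits A B} : Finset (Finset X)) : Set (Finset X))
      ((powersetCard (#A - 1) univ ∪ powersetCard #A univ ∪ powersetCard (#A + 1) univ :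
        Finset (Finset X)) : Set (Finset X)) := by
    intro B hB
    have := mem_Icc.1 (mem_filter.1 hB).2.card_symmDiff_mem_Icc
    simp only [coe_union, Set.mem_union, mem_coe, mem_powersetCard_univ]
    omega
  calc #{B | Splits A B}
      ≤ #(powersetCard (#A - 1) univ ∪ powersetCard #A univ ∪ powersetCard (#A + 1) univ) :=
        card_le_card_of_injOn _ hmaps (symmDiff_right_injective A).injOn
    _ ≤ n.choose (#A - 1) + n.choose #A + n.choose (#A + 1) := by
        refine (card_union_le _ _).trans (add_le_add (card_union_le _ _) le_rfl) |>.trans ?_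
        simp only [card_powersetCard, card_univ, le_refl, n]
    _ ≤ 3 * n.choose (n / 2) := by
        linarith [Nat.choose_le_middle (#A - 1) n, Nat.choose_le_middle #A n,
          Nat.choose_le_middle (#A + 1) n]

lemma NSplitting.card_splittable_le {n : ℕ} {F : Finset (Finset X)} (hF : NSplitting n F) :
    #{B : Fin n → Finset X | ∃ A, ∀ i, Splits A (B i)}
      ≤ #F * (3 * (Fintype.card X).choose (Fintype.card X / 2)) ^ n := by
  calc #{B : Fin n → Finset X | ∃ A, ∀ i, Splits A (B i)}
      ≤ #(F.biUnion fun A ↦ Fintype.piFinset fun _ : Fin n ↦ {B | Splits A B}) := by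
        refine card_le_card fun B hB ↦ ?_
        obtain ⟨A, hAF, hA⟩ := hF B (mem_filter.1 hB).2
        exact mem_biUnion.2 ⟨A, hAF, Fintype.mem_piFinset.2 fun i ↦ mem_filter.2 ⟨mem_univ _, hA i⟩⟩
    _ ≤ ∑ A ∈ F, #(Fintype.piFinset fun _ : Fin n ↦ {B | Splits A B}) := card_biUnion_le
    _ ≤ ∑ _A ∈ F, (3 * (Fintype.card X).choose (Fintype.card X / 2)) ^ n :=
        sum_le_sum fun A _ ↦ by
          rw [Fintype.card_piFinset_const]
          exact Nat.pow_le_pow_left (card_filter_splits_le A) n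
    _ = _ := by rw [sum_const, smul_eq_mul]

end

theorem stmt_16_general (k : ℕ) (F : Finset (Finset (Fin k)))
    (hF : NSplitting 2 F) :
    (2 : ℝ) ^ (2 * k) / (9 * (k.choose (k / 2)) ^ 2) ≤ F.card := by
  have hall : ∀ B : Fin 2 → Finset (Fin k), ∃ A, ∀ i, Splits A (B i) := fun B ↦ by
    obtain ⟨A, h₀, h₁⟩ := exists_splits_pair (B 0) (B 1)
    exact ⟨A, Fin.forall_fin_two.2 ⟨h₀, h₁⟩⟩
  have key : 2 ^ (2 * k) ≤ #F * (9 * k.choose (k / 2) ^ 2) := by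
    have := hF.card_splittable_le
    simp only [hall, filter_true, card_univ, Fintype.card_pi, Fintype.card_finset, Fintype.card_fin,
      prod_const] at this
    convert this using 1 <;> ring
  have hC : 0 < k.choose (k / 2) := Nat.choose_pos (Nat.div_le_self k 2)
  rw [div_le_iff₀ (by positivity)]
  exact_mod_cast key

theorem stmt_16 (k : ℕ) (hk : 2 ≤ k) (hke : Even k) (F : Finset (Finset (Fin k)))
    (hF : NSplitting 2 F) :
    (2 : ℝ) ^ (2 * k) / (9 * (k.choose (k / 2)) ^ 2) ≤ F.card :=
  stmt_16_general k F hF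
end
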